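/- arXiv:2602.05952 — 6 statements merged into one kernel-verified Lean document; each statement's English description precedes it below -/
import Mathlib

section
/- The Wronskian-type polynomial a_{k+1}(λ) = U_k(λ)U_{k+1}'(λ) − U_k'(λ)U_{k+1}(λ) is strictly positive for every real λ and every k≥0. -/
open Polynomial

noncomputable def U (c r : ℕ → ℝ) : ℕ → Polynomial ℝ
  | 0 => 1
  | 1 => X - C (c 0)
  | (k+2) => (X + C ((-1)^(k+2) * c (k+1))) * U c r (k+1) - C (r (k+1)) * U c r k

/-- `a c r k` is the paper's `a_{k+1} = U_k U_{k+1}' - U_k' U_{k+1}`. -/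
noncomputable def a (c r : ℕ → ℝ) (k : ℕ) : Polynomial ℝ :=
  U c r k * derivative (U c r (k+1)) - derivative (U c r k) * U c r (k+1)

lemma a_succ (c r : ℕ → ℝ) (k : ℕ) :
    a c r (k+1) = (U c r (k+1))^2 + C (r (k+1)) * a c r k := by
  have h : U c r (k+2) = (X + C ((-1)^(k+2) * c (k+1))) * U c r (k+1) - C (r (k+1)) * U c r k := rfl
  simp only [a, show k+1+1 = k+2 from rfl, h, derivative_sub, derivative_mul,
    derivative_add, derivative_X, derivative_C]
  ring

theorem stmt2 (c r : ℕ → ℝ) (hr : ∀ k, 1 ≤ k → 0 < r k) (k : ℕ) (lam : ℝ) :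
    0 < (a c r k).eval lam := by
  induction k with
  | zero =>
      simp [a, U]
  | succ k ih =>
      rw [a_succ]
      have hr' := hr (k+1) (Nat.le_add_left 1 k)
      have hsq : 0 ≤ ((U c r (k+1)).eval lam)^2 := sq_nonneg _
      simp only [eval_add, eval_mul, eval_pow, eval_C]
      nlinarith
end

section
/- Every polynomial U_{k+1} in the sequence has k+1 real and distinct (simple) roots. -/
/-!
`U` satisfies `p (k + 2) = (X + a k) * p (k + 1) - b k * p k` with `b k = r (k + 1) > 0`. For any
such recurrence, by induction on `n`, `p (n + 1)` has `n + 1` simple real roots `ξ 0 < ⋯ < ξ n`,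
and `p n` alternates in sign on them, with sign `(-1) ^ (n - i)` at `ξ i`. At a root of `p (n + 1)`
the recurrence reads `p (n + 2) (ξ i) = - b n * p n (ξ i)`, so `p (n + 2)` alternates in sign on the
`ξ i` as well; together with its signs at `±∞` the intermediate value theorem yields a root in each
of the `n + 2` gaps. By degree these are all the roots of `p (n + 2)`, and they interlace with the
`ξ i`, which gives the sign pattern of `p (n + 1)` on them.
-/

open Polynomial

open Filter Finset Asymptotics

theorem Polynomial.Monic.eventually_atTop_eval_pos {p : ℝ[X]} (hp : p.Monic)
    (hdeg : 0 < p.natDegree) : ∀ᶠ x in atTop, 0 < p.eval x :=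
  (p.tendsto_atTop_of_leadingCoeff_nonneg (natDegree_pos_iff_degree_pos.mp hdeg)
    (by rw [hp.leadingCoeff]; exact zero_le_one)).eventually_gt_atTop 0

theorem Polynomial.Monic.eventually_atBot_neg_one_pow_mul_eval_pos {p : ℝ[X]} (hp : p.Monic)
    (hdeg : 0 < p.natDegree) : ∀ᶠ x in atBot, 0 < (-1) ^ p.natDegree * p.eval x := by
  have hequiv : (fun x => (-1) ^ p.natDegree * p.eval x) ~[atBot] fun x => (-x) ^ p.natDegree := by
    convert (IsEquivalent.refl (u := fun _ : ℝ => ((-1 : ℝ) ^ p.natDegree))).mul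
      p.isEquivalent_atBot_lead using 1 <;> funext x <;>
    simp only [Pi.mul_apply, hp.leadingCoeff, one_mul, neg_pow x]
  exact (hequiv.symm.tendsto_atTop
    ((tendsto_pow_atTop hdeg.ne').comp tendsto_neg_atBot_atTop)).eventually_gt_atTop 0

theorem Polynomial.Monic.eq_prod_X_sub_C_of_eval_eq_zero {R : Type*} [CommRing R] [IsDomain R]
    {p : R[X]} (hp : p.Monic) {n : ℕ} (hdeg : p.natDegree = n) {η : ℕ → R}
    (hinj : Set.InjOn η (Set.Iio n)) (hroot : ∀ i < n, p.eval (η i) = 0) :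
    p = ∏ i ∈ range n, (X - C (η i)) := by
  have hmonic : (∏ i ∈ range n, (X - C (η i))).Monic :=
    monic_prod_of_monic _ _ fun i _ => monic_X_sub_C (η i)
  have hdeg' : (∏ i ∈ range n, (X - C (η i))).natDegree = n := by
    rw [natDegree_prod_of_monic _ _ fun i _ => monic_X_sub_C (η i)]
    simp
  refine eq_of_degree_sub_lt_of_eval_index_eq (range n) (by rwa [coe_range]) ?_ fun i hi => ?_
  · rw [card_range]
    have hlc : p.leadingCoeff = (∏ i ∈ range n, (X - C (η i))).leadingCoeff := by
      rw [hp.leadingCoeff, hmonic.leadingCoeff]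
    refine (degree_sub_lt_left ?_ hp.ne_zero hlc).trans_le ?_
    · rw [degree_eq_natDegree hp.ne_zero, degree_eq_natDegree hmonic.ne_zero, hdeg, hdeg']
    · rw [degree_eq_natDegree hp.ne_zero, hdeg]
  · rw [hroot i (mem_range.mp hi), eval_prod]
    exact (prod_eq_zero hi (by simp)).symm

lemma exists_mem_Ioo_eq_zero_of_mul_neg {f : ℝ → ℝ} (hf : Continuous f) {a b : ℝ} (hab : a ≤ b)
    (h : f a * f b < 0) : ∃ x ∈ Set.Ioo a b, f x = 0 := by
  rcases mul_neg_iff.mp h with ⟨ha, hb⟩ | ⟨ha, hb⟩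
  · exact intermediate_value_Ioo' hab hf.continuousOn ⟨hb, ha⟩
  · exact intermediate_value_Ioo hab hf.continuousOn ⟨ha, hb⟩

lemma exists_zeros_between_of_mul_neg {f : ℝ → ℝ} (hf : Continuous f) {t : ℕ → ℝ} {m : ℕ}
    (ht : ∀ j < m, t j < t (j + 1)) (hsign : ∀ j < m, f (t j) * f (t (j + 1)) < 0) :
    ∃ η : ℕ → ℝ, ∀ j < m, η j ∈ Set.Ioo (t j) (t (j + 1)) ∧ f (η j) = 0 := by
  have h : ∀ j, ∃ x, j < m → x ∈ Set.Ioo (t j) (t (j + 1)) ∧ f x = 0 := fun j => by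
    by_cases hj : j < m
    · obtain ⟨x, hx, hfx⟩ := exists_mem_Ioo_eq_zero_of_mul_neg hf (ht j hj).le (hsign j hj)
      exact ⟨x, fun _ => ⟨hx, hfx⟩⟩
    · exact ⟨0, fun h => absurd h hj⟩
  choose η hη using h
  exact ⟨η, hη⟩

lemma mul_neg_of_neg_one_pow_mul_pos {x y : ℝ} (k : ℕ) (hx : 0 < (-1) ^ k * x)
    (hy : 0 < (-1) ^ (k + 1) * y) : x * y < 0 := by
  have h := mul_pos hx hy
  rw [show (-1) ^ k * x * ((-1) ^ (k + 1) * y) = -((-1) ^ (2 * k) * (x * y)) by ring,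
    (even_two_mul k).neg_one_pow, one_mul] at h
  linarith

lemma neg_one_pow_mul_prod_sub_pos {ξ : ℕ → ℝ} {x : ℝ} {i m : ℕ} (him : i ≤ m)
    (hlt : ∀ j < i, ξ j < x) (hgt : ∀ j, i ≤ j → j < m → x < ξ j) :
    0 < (-1) ^ (m + i) * ∏ j ∈ range m, (x - ξ j) := by
  induction m, him using Nat.le_induction with
  | base =>
    rw [← two_mul, (even_two_mul i).neg_one_pow, one_mul]
    exact prod_pos fun j hj => sub_pos.mpr (hlt j (mem_range.mp hj))
  | succ m him ih =>
    have hm : x - ξ m < 0 := sub_neg.mpr (hgt m him m.lt_succ_self)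
    have := ih fun j hij hjm => hgt j hij (hjm.trans m.lt_succ_self)
    rw [prod_range_succ, add_right_comm, pow_succ]
    nlinarith

lemma exists_alternating_extension {Q : ℝ[X]} (hQ : Q.Monic) {n : ℕ}
    (hdeg : Q.natDegree = n + 2) {ξ : ℕ → ℝ} (hξ : StrictMonoOn ξ (Set.Iio (n + 1)))
    (hsign : ∀ i ≤ n, 0 < (-1) ^ (n + 1 + i) * Q.eval (ξ i)) :
    ∃ t : ℕ → ℝ, (∀ j < n + 2, t j < t (j + 1)) ∧ (∀ i ≤ n, t (i + 1) = ξ i) ∧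
      ∀ j ≤ n + 2, 0 < (-1) ^ (n + j) * Q.eval (t j) := by
  obtain ⟨lo, hlo, hlo_lt⟩ := ((hQ.eventually_atBot_neg_one_pow_mul_eval_pos (by omega)).and
    (eventually_lt_atBot (ξ 0))).exists
  obtain ⟨hi, hhi, hhi_gt⟩ := ((hQ.eventually_atTop_eval_pos (by omega)).and
    (eventually_gt_atTop (ξ n))).exists
  rw [hdeg, pow_add, neg_one_sq, mul_one] at hlo
  -- `ξ` padded by a point on each side, beyond which `Q` has the sign it has at `∓∞`
  refine ⟨fun j => if j = 0 then lo else if j = n + 2 then hi else ξ (j - 1), ?_, ?_, ?_⟩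
  · intro j hj
    rcases Nat.eq_zero_or_pos j with rfl | hj0
    · simpa using hlo_lt
    rcases (Nat.lt_succ_iff.mp hj).eq_or_lt with rfl | hjn
    · simpa using hhi_gt
    simp only [hj0.ne', if_false, show j + 1 ≠ 0 by omega, show j ≠ n + 2 by omega,
      show j + 1 ≠ n + 2 by omega, Nat.add_sub_cancel]
    exact hξ (Set.mem_Iio.mpr (by omega)) (Set.mem_Iio.mpr (by omega)) (by omega)
  · intro i hi
    simp [show i ≠ n + 1 by omega]
  · intro j hj
    rcases Nat.eq_zero_or_pos j with rfl | hj0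
    · simpa using hlo
    rcases hj.eq_or_lt with rfl | hjn
    · simpa [show n + (n + 2) = 2 * (n + 1) by ring] using hhi
    obtain ⟨i, rfl⟩ := Nat.exists_eq_add_of_lt hj0
    simp only [show 0 + i + 1 ≠ 0 by omega, show 0 + i + 1 ≠ n + 2 by omega, if_false]
    rw [show 0 + i + 1 - 1 = i by omega, show n + (0 + i + 1) = n + 1 + i by omega]
    exact hsign i (by omega)

theorem exists_interlacing_roots_of_alternating {P Q : ℝ[X]} {n : ℕ} (hQ : Q.Monic)
    (hdeg : Q.natDegree = n + 2) {ξ : ℕ → ℝ} (hξ : StrictMonoOn ξ (Set.Iio (n + 1)))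
    (hP : P = ∏ i ∈ range (n + 1), (X - C (ξ i)))
    (hsign : ∀ i ≤ n, 0 < (-1) ^ (n + 1 + i) * Q.eval (ξ i)) :
    ∃ η : ℕ → ℝ, StrictMonoOn η (Set.Iio (n + 2)) ∧ Q = ∏ i ∈ range (n + 2), (X - C (η i)) ∧
      ∀ i ≤ n + 1, 0 < (-1) ^ (n + 1 + i) * P.eval (η i) := by
  obtain ⟨t, ht, htξ, htsign⟩ := exists_alternating_extension hQ hdeg hξ hsign
  have htmono : StrictMonoOn t (Set.Iic (n + 2)) := strictMonoOn_Iic_of_lt_succ fun j hj => by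
    simpa using ht j hj
  have htle : ∀ {i j}, i ≤ j → j ≤ n + 2 → t i ≤ t j := fun hij hj =>
    (htmono.le_iff_le (Set.mem_Iic.mpr (hij.trans hj)) (Set.mem_Iic.mpr hj)).mpr hij
  obtain ⟨η, hη⟩ := exists_zeros_between_of_mul_neg Q.continuous ht fun j hj =>
    mul_neg_of_neg_one_pow_mul_pos (n + j) (htsign j hj.le) (htsign (j + 1) hj)
  have hηmono : StrictMonoOn η (Set.Iio (n + 2)) := fun i hi j hj hij =>
    calc η i < t (i + 1) := (hη i hi).1.2
      _ ≤ t j := htle hij hj.le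
      _ < η j := (hη j hj).1.1
  refine ⟨η, hηmono,
    hQ.eq_prod_X_sub_C_of_eval_eq_zero hdeg hηmono.injOn fun i hi => (hη i hi).2, fun i hi => ?_⟩
  have hbelow : ∀ j < i, ξ j < η i := fun j hj =>
    calc ξ j = t (j + 1) := (htξ j (by omega)).symm
      _ ≤ t i := htle hj (by omega)
      _ < η i := (hη i (by omega)).1.1
  have habove : ∀ j, i ≤ j → j < n + 1 → η i < ξ j := fun j hij hj =>
    calc η i < t (i + 1) := (hη i (by omega)).1.2
      _ ≤ t (j + 1) := htle (by omega) (by omega)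
      _ = ξ j := htξ j (by omega)
  simpa only [hP, eval_prod, eval_sub, eval_X, eval_C] using
    neg_one_pow_mul_prod_sub_pos (by omega) hbelow habove

section ThreeTermRecurrence

variable {p : ℕ → ℝ[X]} {x₀ : ℝ} {a b : ℕ → ℝ}

theorem monic_and_natDegree_of_recurrence (h0 : p 0 = 1) (h1 : p 1 = X - C x₀)
    (hrec : ∀ k, p (k + 2) = (X + C (a k)) * p (k + 1) - C (b k) * p k) :
    ∀ n, (p n).Monic ∧ (p n).natDegree = n
  | 0 => by simp [h0]
  | 1 => by rw [h1]; exact ⟨monic_X_sub_C x₀, natDegree_X_sub_C x₀⟩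
  | n + 2 => by
    obtain ⟨hmonic, hdeg⟩ := monic_and_natDegree_of_recurrence h0 h1 hrec (n + 1)
    have hdeg' := (monic_and_natDegree_of_recurrence h0 h1 hrec n).2
    have hlead : ((X + C (a n)) * p (n + 1)).natDegree = n + 2 := by
      rw [(monic_X_add_C _).natDegree_mul hmonic, natDegree_X_add_C, hdeg, add_comm]
    have hlt : (C (b n) * p n).natDegree < ((X + C (a n)) * p (n + 1)).natDegree := by
      rw [hlead]
      exact (natDegree_C_mul_le _ _).trans_lt (by omega)
    rw [hrec]
    exact ⟨((monic_X_add_C _).mul hmonic).sub_of_left (degree_lt_degree hlt),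
      by rw [natDegree_sub_eq_left_of_natDegree_lt hlt, hlead]⟩

/-- The sign `(-1) ^ (n + i)` is `(-1) ^ (n - i)`, written without truncated subtraction. -/
theorem exists_interlacing_roots_of_recurrence (h0 : p 0 = 1) (h1 : p 1 = X - C x₀)
    (hrec : ∀ k, p (k + 2) = (X + C (a k)) * p (k + 1) - C (b k) * p k) (hb : ∀ k, 0 < b k) :
    ∀ n, ∃ ξ : ℕ → ℝ, StrictMonoOn ξ (Set.Iio (n + 1)) ∧
      p (n + 1) = ∏ i ∈ range (n + 1), (X - C (ξ i)) ∧
      ∀ i ≤ n, 0 < (-1) ^ (n + i) * (p n).eval (ξ i)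
  | 0 => ⟨fun _ => x₀, fun i hi j hj hij => by simp_all, by simp [h1],
      fun i hi => by simp [Nat.le_zero.mp hi, h0]⟩
  | n + 1 => by
    obtain ⟨ξ, hξ, hprod, hsign⟩ := exists_interlacing_roots_of_recurrence h0 h1 hrec hb n
    obtain ⟨hmonic, hdeg⟩ := monic_and_natDegree_of_recurrence h0 h1 hrec (n + 2)
    refine exists_interlacing_roots_of_alternating hmonic hdeg hξ hprod fun i hi => ?_
    have hroot : (p (n + 1)).eval (ξ i) = 0 := by
      rw [hprod, eval_prod]
      exact prod_eq_zero (i := i) (mem_range.mpr (by omega)) (by simp)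
    have heval : (p (n + 2)).eval (ξ i) = -(b n * (p n).eval (ξ i)) := by
      simp [hrec, hroot]
    rw [heval, add_right_comm, pow_succ]
    nlinarith [hsign i hi, hb n]

end ThreeTermRecurrence

/-- Every `U_{k+1}` has `k+1` real, distinct (hence simple) roots. -/
theorem stmt3 (c r : ℕ → ℝ) (hr : ∀ k, 1 ≤ k → 0 < r k) (k : ℕ) :
    ∃ ξ : Fin (k+1) → ℝ, StrictMono ξ ∧
      (∀ i, (U c r (k+1)).eval (ξ i) = 0) ∧
      (∀ x : ℝ, (U c r (k+1)).eval x = 0 → ∃ i, x = ξ i) := by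
  obtain ⟨ξ, hξ, hprod, -⟩ := exists_interlacing_roots_of_recurrence (p := U c r) (x₀ := c 0)
    rfl rfl (fun _ => rfl) (fun k => hr (k + 1) k.succ_pos) k
  have hroots : ∀ x, (U c r (k + 1)).eval x = 0 ↔ ∃ i < k + 1, x = ξ i := fun x => by
    simp [hprod, eval_prod, prod_eq_zero_iff, sub_eq_zero]
  refine ⟨fun i => ξ i, fun i j hij => hξ i.isLt j.isLt hij,
    fun i => (hroots _).mpr ⟨i, i.isLt, rfl⟩, fun x hx => ?_⟩
  obtain ⟨i, hi, rfl⟩ := (hroots x).mp hx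
  exact ⟨⟨i, hi⟩, rfl⟩
end

section
/- Assume additionally that c_0>0 and c_j≥0 for j≥1. Then for every k≥1, sgn(U_{2k−1}(0)) = sgn(U_{2k}(0)) = (−1)^k; in particular U_1(0)<0, U_2(0)<0, U_3(0)>0, U_4(0)>0, and so on, each U_j(0) being nonzero. -/
open Polynomial

lemma U_eval (c r : ℕ → ℝ) (m : ℕ) :
    (U c r (m+2)).eval 0 =
      ((-1)^(m+2) * c (m+1)) * (U c r (m+1)).eval 0 - r (m+1) * (U c r m).eval 0 := by
  simp [U]

lemma key (c r : ℕ → ℝ) (hc0 : 0 < c 0) (hc : ∀ j, 1 ≤ j → 0 ≤ c j)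
    (hr : ∀ k, 1 ≤ k → 0 < r k) :
    ∀ k : ℕ, 1 ≤ k →
      0 < (-1:ℝ)^k * (U c r (2*k-1)).eval 0 ∧ 0 < (-1:ℝ)^k * (U c r (2*k)).eval 0 := by
  intro k hk
  induction k, hk using Nat.le_induction with
  | base =>
      have h2 := U_eval c r 0
      have hc1 := hc 1 le_rfl
      have hr1 := hr 1 le_rfl
      simp [U, h2]
      constructor <;> nlinarith
  | succ k hk ih =>
      obtain ⟨h1, h2⟩ := ih
      have e1 : 2*(k+1)-1 = (2*k-1)+2 := by omega
      have e2 : 2*(k+1) = (2*k)+2 := by omega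
      have e3 : (2*k-1)+1 = 2*k := by omega
      have hcc := hc (2*k) (by omega)
      have hrr := hr (2*k) (by omega)
      have hcc' := hc (2*k+1) (by omega)
      have hrr' := hr (2*k+1) (by omega)
      have Ea : (U c r (2*(k+1)-1)).eval 0 =
          ((-1)^((2*k-1)+2) * c (2*k)) * (U c r (2*k)).eval 0
            - r (2*k) * (U c r (2*k-1)).eval 0 := by
        rw [e1, U_eval, e3]
      have hsgn : ((-1:ℝ))^((2*k-1)+2) = -1 := by
        have : Odd ((2*k-1)+2) := by
          refine ⟨k, by omega⟩
        exact Odd.neg_one_pow this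
      rw [hsgn] at Ea
      have hsk : ((-1:ℝ))^(k+1) = -(-1)^k := by ring
      have ha : 0 < (-1:ℝ)^(k+1) * (U c r (2*(k+1)-1)).eval 0 := by
        rw [Ea, hsk]
        nlinarith [mul_nonneg hcc (le_of_lt h2), mul_pos hrr h1]
      refine ⟨ha, ?_⟩
      have Eb : (U c r (2*(k+1))).eval 0 =
          ((-1)^((2*k)+2) * c (2*k+1)) * (U c r (2*k+1)).eval 0
            - r (2*k+1) * (U c r (2*k)).eval 0 := by
        rw [e2, U_eval]
      have hsgn2 : ((-1:ℝ))^((2*k)+2) = 1 := by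
        have : Even ((2*k)+2) := ⟨k+1, by omega⟩
        exact Even.neg_one_pow this
      have e4 : 2*k+1 = 2*(k+1)-1 := by omega
      rw [hsgn2, one_mul, e4] at Eb
      rw [e4] at hcc' hrr'
      rw [Eb, hsk]
      rw [hsk] at ha
      nlinarith [mul_nonneg hcc' (by linarith : (0:ℝ) ≤ -((-1)^k * (U c r (2*(k+1)-1)).eval 0)), mul_pos hrr' h2]

theorem stmt6 (c r : ℕ → ℝ) (hc0 : 0 < c 0) (hc : ∀ j, 1 ≤ j → 0 ≤ c j)
    (hr : ∀ k, 1 ≤ k → 0 < r k) :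
    ∀ k : ℕ, 1 ≤ k →
      Real.sign ((U c r (2*k-1)).eval 0) = (-1 : ℝ)^k ∧
      Real.sign ((U c r (2*k)).eval 0) = (-1 : ℝ)^k ∧
      (U c r (2*k-1)).eval 0 ≠ 0 ∧ (U c r (2*k)).eval 0 ≠ 0 := by
  intro k hk
  obtain ⟨h1, h2⟩ := key c r hc0 hc hr k hk
  have sign_of : ∀ x : ℝ, 0 < (-1:ℝ)^k * x → Real.sign x = (-1)^k ∧ x ≠ 0 := by
    intro x hx
    rcases Nat.even_or_odd k with he | ho
    · rw [he.neg_one_pow] at hx ⊢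
      rw [one_mul] at hx
      exact ⟨Real.sign_of_pos hx, ne_of_gt hx⟩
    · rw [ho.neg_one_pow] at hx ⊢
      have : x < 0 := by linarith
      exact ⟨Real.sign_of_neg this, ne_of_lt this⟩
  obtain ⟨s1, n1⟩ := sign_of _ h1
  obtain ⟨s2, n2⟩ := sign_of _ h2
  exact ⟨s1, s2, n1, n2⟩
end

section
/- Assume c_0>0, c_j≥0 (j≥1), r_j>0. If k is even, U_k has exactly k/2 negative roots and k/2 positive roots, and U_{k+1} has exactly k/2 negative roots and k/2+1 positive roots; in particular 0 is never a root. -/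
open Polynomial

/-! By induction on `k`, the roots of `U (k + 1)` are real, simple and strictly interlace those
of `U k`: at a root of `U (k + 1)` the recurrence reduces to `U (k + 2) = -r (k + 1) * U k`, whose
signs alternate along the interlaced roots, so the intermediate value theorem puts one root of
`U (k + 2)` in each gap between consecutive roots of `U (k + 1)` and one beyond each end.
Interlacing lets the number of positive roots grow by at most one from `U k` to `U (k + 1)`, and
its parity is fixed by the sign of `U k` at `0`, which the recurrence shows to be
`(-1) ^ ((k + 1) / 2)`. Together these force `(k + 1) / 2` positive and `k / 2` negative roots. -/

open Finset Filter

lemma mod_two_eq_of_pos_neg_one_pow_mul {p q : ℕ} {x : ℝ} (hp : 0 < (-1) ^ p * x)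
    (hq : 0 < (-1) ^ q * x) : p % 2 = q % 2 := by
  rw [neg_one_pow_eq_pow_mod_two] at hp hq
  rcases Nat.mod_two_eq_zero_or_one p with h | h <;>
    rcases Nat.mod_two_eq_zero_or_one q with h' | h' <;>
    simp only [h, h', pow_zero, pow_one, one_mul, neg_one_mul, neg_pos] at hp hq ⊢ <;>
    linarith

lemma pos_neg_one_pow_card_mul_prod {ι : Type*} (s : Finset ι) {f : ι → ℝ}
    (hf : ∀ i ∈ s, f i ≠ 0) : 0 < (-1) ^ #{i ∈ s | f i < 0} * ∏ i ∈ s, f i := by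
  classical
  induction s using Finset.induction_on with
  | empty => simp
  | insert a s ha ih =>
    have ih := ih fun i hi => hf i (mem_insert_of_mem hi)
    rw [prod_insert ha, filter_insert]
    rcases (hf a (mem_insert_self a s)).lt_or_gt with hneg | hpos
    · rw [if_pos hneg, card_insert_of_notMem fun h => ha (mem_filter.mp h).1, pow_succ]
      nlinarith
    · rw [if_neg hpos.not_gt]
      nlinarith

lemma pos_neg_one_pow_card_mul_eval_prod {n : ℕ} (a : Fin n → ℝ) {x : ℝ}
    (hx : ∀ i, a i ≠ x) : 0 < (-1) ^ #{i | x < a i} * (∏ i, (X - C (a i))).eval x := by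
  simpa [eval_prod, sub_neg] using pos_neg_one_pow_card_mul_prod univ (f := fun i => x - a i)
    fun i _ => sub_ne_zero.mpr (hx i).symm

lemma Fin.card_filter_le_val (n m : ℕ) : #{i : Fin n | m ≤ (i : ℕ)} = n - m := by
  have := card_filter_add_card_filter_not (s := univ) (fun i : Fin n => (i : ℕ) < m)
  simp only [Fin.card_filter_val_lt, not_lt, card_univ, Fintype.card_fin] at this
  omega

lemma eq_prod_X_sub_C_of_injective {n : ℕ} {Q : ℝ[X]} (hQ : Q.Monic) (hdeg : Q.natDegree = n)
    {b : Fin n → ℝ} (hb : Function.Injective b) (hroot : ∀ j, Q.eval (b j) = 0) :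
    Q = ∏ j, (X - C (b j)) := by
  refine eq_of_monic_of_dvd_of_natDegree_le (monic_prod_of_monic _ _ fun j _ => monic_X_sub_C _)
    hQ (prod_dvd_of_coprime ((pairwise_coprime_X_sub_C hb).set_pairwise _)
      fun j _ => dvd_iff_isRoot.mpr (hroot j)) ?_
  rw [hdeg, natDegree_prod_of_monic _ _ fun j _ => monic_X_sub_C _]
  simp

lemma eval_prod_X_sub_C_apply {n : ℕ} (b : Fin n → ℝ) (j : Fin n) :
    (∏ i, (X - C (b i))).eval (b j) = 0 := by
  rw [eval_prod]
  exact prod_eq_zero (mem_univ j) (by simp)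

lemma ncard_setOf_eval_prod_eq_zero {n : ℕ} {a : Fin n → ℝ} (ha : Function.Injective a)
    (p : ℝ → Prop) [DecidablePred p] :
    {x | (∏ i, (X - C (a i))).eval x = 0 ∧ p x}.ncard = #{i | p (a i)} := by
  have : {x | (∏ i, (X - C (a i))).eval x = 0 ∧ p x} =
      a '' ↑({i | p (a i)} : Finset (Fin n)) := by
    ext x
    simp only [eval_prod, eval_sub, eval_X, eval_C, prod_eq_zero_iff, sub_eq_zero]
    aesop
  rw [this, Set.ncard_image_of_injective _ ha, Set.ncard_coe_finset]

lemma exists_mem_Ioo_eval_eq_zero {Q : ℝ[X]} {u v : ℝ} (huv : u < v) (p : ℕ)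
    (hu : 0 < (-1) ^ (p + 1) * Q.eval u) (hv : 0 < (-1) ^ p * Q.eval v) :
    ∃ x ∈ Set.Ioo u v, Q.eval x = 0 := by
  have hcont := Q.continuous.continuousOn (s := Set.Icc u v)
  rw [pow_succ] at hu
  rcases neg_one_pow_eq_or ℝ p with h | h <;> rw [h] at hu hv
  · exact intermediate_value_Ioo huv.le hcont ⟨by linarith, by linarith⟩
  · exact intermediate_value_Ioo' huv.le hcont ⟨by linarith, by linarith⟩

def Interlaces {n : ℕ} (a : Fin n → ℝ) (b : Fin (n + 1) → ℝ) : Prop :=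
  ∀ i, b i.castSucc < a i ∧ a i < b i.succ

namespace Interlaces

variable {n : ℕ} {a : Fin n → ℝ} {b : Fin (n + 1) → ℝ}

lemma strictMono_right (h : Interlaces a b) : StrictMono b :=
  Fin.strictMono_iff_lt_succ.2 fun i => (h i).1.trans (h i).2

lemma strictMono_left (h : Interlaces a b) : StrictMono a := fun i j hij =>
  (h i).2.trans <| (h.strictMono_right.monotone (Fin.succ_le_castSucc_iff.mpr hij)).trans_lt (h j).1

lemma lt_apply_iff (h : Interlaces a b) (j : Fin (n + 1)) (i : Fin n) :
    b j < a i ↔ (j : ℕ) ≤ i := by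
  refine ⟨fun hlt => ?_, fun hle => ?_⟩
  · by_contra! hij
    have : i.succ ≤ j := Fin.le_iff_val_le_val.mpr (by simp only [Fin.val_succ]; omega)
    exact lt_asymm hlt ((h i).2.trans_le (h.strictMono_right.monotone this))
  · exact (h.strictMono_right.monotone (Fin.le_iff_val_le_val.mpr hle)).trans_lt (h i).1

lemma apply_lt_iff (h : Interlaces a b) (i : Fin n) (j : Fin (n + 1)) :
    a i < b j ↔ (i : ℕ) < j := by
  refine ⟨fun hlt => ?_, fun hij => ?_⟩
  · have := (h.lt_apply_iff j i).not.mp (lt_asymm hlt)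
    omega
  · have : i.succ ≤ j := Fin.le_iff_val_le_val.mpr (by simp only [Fin.val_succ]; omega)
    exact (h i).2.trans_le (h.strictMono_right.monotone this)

lemma apply_ne (h : Interlaces a b) (i : Fin n) (j : Fin (n + 1)) : a i ≠ b j := fun heq => by
  have h1 := (h.lt_apply_iff j i).not
  have h2 := h.apply_lt_iff i j
  simp only [heq, lt_irrefl, not_false_eq_true, true_iff, false_iff, not_le] at h1 h2
  omega

lemma pos_neg_one_pow_mul_eval (h : Interlaces a b) (j : Fin (n + 1)) :
    0 < (-1) ^ (n - j) * (∏ i, (X - C (a i))).eval (b j) := by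
  have hcard : #{i | b j < a i} = n - j := by
    simp only [h.lt_apply_iff, Fin.card_filter_le_val]
  rw [← hcard]
  exact pos_neg_one_pow_card_mul_eval_prod a fun i => h.apply_ne i j

lemma card_filter_pos_le (h : Interlaces a b) : #{i | 0 < a i} ≤ #{j | 0 < b j} :=
  card_le_card_of_injOn Fin.succ (fun i hi => by
    simpa using (mem_filter.mp hi).2.trans (h i).2) (Fin.succ_injective _).injOn

lemma card_filter_pos_le_succ (h : Interlaces a b) : #{j | 0 < b j} ≤ #{i | 0 < a i} + 1 := by
  have : ({j | 0 < b j} : Finset (Fin (n + 1))) ⊆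
      insert (Fin.last n) (({i | 0 < a i} : Finset (Fin n)).map Fin.castSuccEmb) := by
    intro j hj
    induction j using Fin.lastCases with
    | last => exact mem_insert_self _ _
    | cast i =>
      simp only [mem_filter, mem_univ, true_and] at hj
      exact mem_insert_of_mem (mem_map_of_mem _ (by simpa using hj.trans (h i).1))
  exact (card_le_card this).trans ((card_insert_le _ _).trans (by rw [card_map]))

end Interlaces

open Asymptotics in
lemma Polynomial.Monic.tendsto_neg_one_pow_mul_eval_atBot {Q : ℝ[X]} (hQ : Q.Monic)
    (hd : Q.natDegree ≠ 0) : Tendsto (fun x => (-1) ^ Q.natDegree * Q.eval x) atBot atTop := by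
  have hlead := (IsEquivalent.refl (u := fun _ : ℝ => (-1 : ℝ) ^ Q.natDegree)).mul
    Q.isEquivalent_atBot_lead
  refine hlead.symm.tendsto_atTop <|
    ((tendsto_pow_atTop hd).comp tendsto_neg_atBot_atTop).congr fun x => ?_
  simp only [Function.comp_apply, Pi.mul_apply, hQ.leadingCoeff, one_mul]
  exact neg_pow x _

lemma exists_interlaces_of_pos_neg_one_pow_mul_eval {n : ℕ} {Q : ℝ[X]} (hQ : Q.Monic)
    (hdeg : Q.natDegree = n + 1) {a : Fin n → ℝ} (ha : StrictMono a)
    (hsign : ∀ i : Fin n, 0 < (-1) ^ (n - i) * Q.eval (a i)) :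
    ∃ b, Q = ∏ j, (X - C (b j)) ∧ Interlaces a b := by
  have htop : Tendsto Q.eval atTop atTop := Q.tendsto_atTop_of_leadingCoeff_nonneg
    (natDegree_pos_iff_degree_pos.mp (by omega)) (by rw [hQ.leadingCoeff]; exact zero_le_one)
  have hbot := hQ.tendsto_neg_one_pow_mul_eval_atBot (by omega)
  rw [hdeg] at hbot
  obtain ⟨L, hL, hLa⟩ := ((hbot.eventually_gt_atTop 0).and
    (Filter.eventually_all (ι := Fin n) |>.2 fun i => eventually_lt_atBot (a i))).exists
  obtain ⟨R, hR, hLR, hRa⟩ := ((htop.eventually_gt_atTop 0).and ((eventually_gt_atTop L).and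
    (Filter.eventually_all (ι := Fin n) |>.2 fun i => eventually_gt_atTop (a i)))).exists
  set lo : Fin (n + 1) → ℝ := Fin.cons L a
  set hi : Fin (n + 1) → ℝ := Fin.snoc a R
  have hlo : ∀ j : Fin (n + 1), 0 < (-1) ^ (n - j + 1) * Q.eval (lo j) := by
    intro j
    induction j using Fin.cases with
    | zero => simpa [lo] using hL
    | succ i => simpa [lo, show n - (i + 1) + 1 = n - i by omega] using hsign i
  have hhi : ∀ j : Fin (n + 1), 0 < (-1) ^ (n - j) * Q.eval (hi j) := by
    intro j
    induction j using Fin.lastCases with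
    | last => simpa [hi] using hR
    | cast i => simpa [hi] using hsign i
  have hL_lt : ∀ j, L < hi j :=
    Fin.lastCases (by simpa [hi] using hLR) fun i => by simpa [hi] using hLa i
  have ha_lt : ∀ (i : Fin n) (j : Fin (n + 1)), (i : ℕ) < j → a i < hi j := by
    intro i j hij
    induction j using Fin.lastCases with
    | last => simpa [hi] using hRa i
    | cast i' => simpa [hi] using ha (Fin.lt_def.mpr (by simpa using hij))
  have hlt : ∀ j, lo j < hi j :=
    Fin.cases (hL_lt 0) fun i => by simpa [lo] using ha_lt i i.succ (by simp)
  choose b hb hroot using fun j => exists_mem_Ioo_eval_eq_zero (hlt j) (n - j) (hlo j) (hhi j)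
  have hint : Interlaces a b := fun i =>
    ⟨by simpa [hi] using (hb i.castSucc).2, by simpa [lo] using (hb i.succ).1⟩
  exact ⟨b, eq_prod_X_sub_C_of_injective hQ hdeg hint.strictMono_right.injective hroot, hint⟩

lemma monic_natDegree_X_add_C_mul_sub_C_mul {R : Type*} [CommRing R] [Nontrivial R]
    {p q : R[X]} {n : ℕ} (hp : p.Monic) (hpn : p.natDegree = n + 1) (hqn : q.natDegree ≤ n)
    (a b : R) :
    ((X + C a) * p - C b * q).Monic ∧ ((X + C a) * p - C b * q).natDegree = n + 2 := by
  have hmul : ((X + C a) * p).Monic := (monic_X_add_C a).mul hp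
  have hmuln : ((X + C a) * p).natDegree = n + 2 := by
    rw [(monic_X_add_C a).natDegree_mul hp, natDegree_X_add_C, hpn]
    ring
  have hlt : (C b * q).natDegree < ((X + C a) * p).natDegree :=
    (natDegree_C_mul_le b q).trans_lt (by omega)
  exact ⟨hmul.sub_of_left (degree_lt_degree hlt),
    by rw [natDegree_sub_eq_left_of_natDegree_lt hlt, hmuln]⟩

section U

variable (c r : ℕ → ℝ)

lemma U_monic_natDegree (k : ℕ) : (U c r k).Monic ∧ (U c r k).natDegree = k := by
  induction k using Nat.twoStepInduction with
  | zero => exact ⟨monic_one, natDegree_one⟩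
  | one => exact ⟨monic_X_sub_C _, natDegree_X_sub_C _⟩
  | more k hk hk1 => exact monic_natDegree_X_add_C_mul_sub_C_mul hk1.1 hk1.2 hk.2.le _ _

lemma U_eval_add_two (k : ℕ) (x : ℝ) : (U c r (k + 2)).eval x =
    (x + (-1) ^ (k + 2) * c (k + 1)) * (U c r (k + 1)).eval x - r (k + 1) * (U c r k).eval x := by
  simp [U]

lemma pos_neg_one_pow_mul_U_eval_zero (hc0 : 0 < c 0) (hc : ∀ j, 1 ≤ j → 0 ≤ c j)
    (hr : ∀ k, 1 ≤ k → 0 < r k) (k : ℕ) : 0 < (-1) ^ ((k + 1) / 2) * (U c r k).eval 0 := by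
  induction k using Nat.twoStepInduction with
  | zero => simp [U]
  | one => simpa [U] using hc0
  | more k ih0 ih1 =>
    have hck := hc (k + 1) (by omega)
    have hrk := hr (k + 1) (by omega)
    rw [U_eval_add_two, zero_add]
    obtain ⟨m, rfl | rfl⟩ := Nat.even_or_odd' k
    · have hpow : (-1 : ℝ) ^ (2 * m + 2) = 1 := Even.neg_one_pow ⟨m + 1, by ring⟩
      rw [show (2 * m + 1) / 2 = m by omega] at ih0
      rw [show (2 * m + 1 + 1) / 2 = m + 1 by omega, pow_succ] at ih1
      rw [show (2 * m + 2 + 1) / 2 = m + 1 by omega, pow_succ, hpow]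
      nlinarith [mul_nonneg hck ih1.le, mul_pos hrk ih0]
    · have hpow : (-1 : ℝ) ^ (2 * m + 1 + 2) = -1 := Odd.neg_one_pow ⟨m + 1, by ring⟩
      rw [show (2 * m + 1 + 1) / 2 = m + 1 by omega, pow_succ] at ih0
      rw [show (2 * m + 1 + 1 + 1) / 2 = m + 1 by omega, pow_succ] at ih1
      rw [show (2 * m + 1 + 2 + 1) / 2 = m + 1 + 1 by omega, pow_succ, pow_succ, hpow]
      nlinarith [mul_nonneg hck ih1.le, mul_pos hrk ih0]

lemma U_eval_zero_ne_zero (hc0 : 0 < c 0) (hc : ∀ j, 1 ≤ j → 0 ≤ c j)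
    (hr : ∀ k, 1 ≤ k → 0 < r k) (k : ℕ) : (U c r k).eval 0 ≠ 0 :=
  right_ne_zero_of_mul (pos_neg_one_pow_mul_U_eval_zero c r hc0 hc hr k).ne'

lemma exists_interlaces_U (hr : ∀ k, 1 ≤ k → 0 < r k) (k : ℕ) :
    ∃ (a : Fin k → ℝ) (b : Fin (k + 1) → ℝ),
      U c r k = ∏ i, (X - C (a i)) ∧ U c r (k + 1) = ∏ j, (X - C (b j)) ∧ Interlaces a b := by
  induction k with
  | zero => exact ⟨Fin.elim0, ![c 0], by simp [U], by simp [U], fun i => i.elim0⟩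
  | succ k ih =>
    obtain ⟨a, b, ha, hb, hab⟩ := ih
    have hsign : ∀ j : Fin (k + 1), 0 < (-1) ^ (k + 1 - j) * (U c r (k + 2)).eval (b j) := by
      intro j
      have hUk := hab.pos_neg_one_pow_mul_eval j
      rw [← ha] at hUk
      rw [U_eval_add_two, hb, eval_prod_X_sub_C_apply, show k + 1 - j = k - j + 1 by omega,
        pow_succ]
      nlinarith [hr (k + 1) (by omega)]
    obtain ⟨b', hb', hbb'⟩ := exists_interlaces_of_pos_neg_one_pow_mul_eval
      (U_monic_natDegree c r (k + 2)).1 (U_monic_natDegree c r (k + 2)).2 hab.strictMono_right hsign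
    exact ⟨b, b', hb, hb', hbb'⟩

lemma ncard_pos_roots_U (hc0 : 0 < c 0) (hc : ∀ j, 1 ≤ j → 0 ≤ c j)
    (hr : ∀ k, 1 ≤ k → 0 < r k) (k : ℕ) :
    {x | (U c r k).eval x = 0 ∧ 0 < x}.ncard = (k + 1) / 2 := by
  induction k with
  | zero => simp [U]
  | succ k ih =>
    obtain ⟨a, b, ha, hb, hab⟩ := exists_interlaces_U c r hr k
    rw [ha, ncard_setOf_eval_prod_eq_zero hab.strictMono_left.injective] at ih
    rw [hb, ncard_setOf_eval_prod_eq_zero hab.strictMono_right.injective]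
    have hb0 : ∀ j, b j ≠ 0 := fun j hj => U_eval_zero_ne_zero c r hc0 hc hr (k + 1) <| by
      simpa [hb, hj] using eval_prod_X_sub_C_apply b j
    have hparity := mod_two_eq_of_pos_neg_one_pow_mul (pos_neg_one_pow_card_mul_eval_prod b hb0)
      (hb ▸ pos_neg_one_pow_mul_U_eval_zero c r hc0 hc hr (k + 1))
    have := hab.card_filter_pos_le
    have := hab.card_filter_pos_le_succ
    omega

lemma ncard_neg_roots_U (hc0 : 0 < c 0) (hc : ∀ j, 1 ≤ j → 0 ≤ c j)
    (hr : ∀ k, 1 ≤ k → 0 < r k) (k : ℕ) :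
    {x | (U c r k).eval x = 0 ∧ x < 0}.ncard = k / 2 := by
  obtain ⟨a, b, ha, -, hab⟩ := exists_interlaces_U c r hr k
  have hpos := ncard_pos_roots_U c r hc0 hc hr k
  rw [ha, ncard_setOf_eval_prod_eq_zero hab.strictMono_left.injective] at hpos ⊢
  have ha0 : ∀ i, a i ≠ 0 := fun i hi => U_eval_zero_ne_zero c r hc0 hc hr k <| by
    simpa [ha, hi] using eval_prod_X_sub_C_apply a i
  have hsplit := card_filter_add_card_filter_not (s := univ) (fun i => a i < 0)
  rw [filter_congr fun i _ => not_lt.trans (ha0 i).symm.le_iff_lt] at hsplit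
  simp only [card_univ, Fintype.card_fin] at hsplit
  omega

end U

theorem stmt8 (c r : ℕ → ℝ) (hc0 : 0 < c 0) (hc : ∀ j, 1 ≤ j → 0 ≤ c j)
    (hr : ∀ k, 1 ≤ k → 0 < r k) (k : ℕ) (hk : Even k) :
    {x : ℝ | (U c r k).eval x = 0 ∧ x < 0}.ncard = k / 2 ∧
    {x : ℝ | (U c r k).eval x = 0 ∧ 0 < x}.ncard = k / 2 ∧
    {x : ℝ | (U c r (k+1)).eval x = 0 ∧ x < 0}.ncard = k / 2 ∧
    {x : ℝ | (U c r (k+1)).eval x = 0 ∧ 0 < x}.ncard = k / 2 + 1 ∧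
    (U c r k).eval 0 ≠ 0 ∧ (U c r (k+1)).eval 0 ≠ 0 := by
  have hk2 : k % 2 = 0 := Nat.even_iff.mp hk
  rw [ncard_neg_roots_U c r hc0 hc hr, ncard_pos_roots_U c r hc0 hc hr,
    ncard_neg_roots_U c r hc0 hc hr, ncard_pos_roots_U c r hc0 hc hr]
  exact ⟨rfl, by omega, by omega, by omega,
    U_eval_zero_ne_zero c r hc0 hc hr k, U_eval_zero_ne_zero c r hc0 hc hr (k + 1)⟩
end

section
/- For 0 ≤ m ≤ k and ξ a root of U_{k+1}, the partial derivative of U_{k+1} with respect to the parameter c_m, evaluated at ξ, equals (−1)^{m+1}·U_m(ξ)^2/U_k(ξ) · ∏_{i=m+1}^{k} r_i. -/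
open Polynomial

/-!
Differentiating the three-term recurrence in `c_m` shows that `D_n := ∂U_n/∂c_m (ξ)` satisfies the
same recurrence as `U_n(ξ)`, except for a source term at `n = m + 1`; so `D_n = 0` for `n ≤ m` and
`D_{m+1} = (-1)^(m+1) U_m(ξ)`. The Casoratian `D_{n+1} U_n(ξ) - D_n U_{n+1}(ξ)` of two solutions
of the same recurrence gets multiplied by `r_n` at each step, so it equals
`(-1)^(m+1) U_m(ξ)^2 ∏_{i=m+1}^{n} r_i`. At `n = k` the second term vanishes because
`U_{k+1}(ξ) = 0`, and `U_k(ξ) ≠ 0` since two consecutive `U_n` have no common root.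
-/

/-- `∂U_n/∂c_m` evaluated at `ξ`, obtained by differentiating the recurrence for `U`. -/
noncomputable def partialDerivU (c r : ℕ → ℝ) (ξ : ℝ) (m : ℕ) : ℕ → ℝ
  | 0 => 0
  | 1 => -(Pi.single m 1 : ℕ → ℝ) 0
  | (k+2) => (-1)^(k+2) * (Pi.single m 1 : ℕ → ℝ) (k+1) * (U c r (k+1)).eval ξ
      + (ξ + (-1)^(k+2) * c (k+1)) * partialDerivU c r ξ m (k+1) - r (k+1) * partialDerivU c r ξ m k

section

variable (c r : ℕ → ℝ) (ξ : ℝ)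

lemma eval_U_add_two (k : ℕ) :
    (U c r (k+2)).eval ξ = (ξ + (-1)^(k+2) * c (k+1)) * (U c r (k+1)).eval ξ
      - r (k+1) * (U c r k).eval ξ := by
  simp [U]

lemma hasDerivAt_update_apply (m j : ℕ) :
    HasDerivAt (fun t : ℝ => Function.update c m t j) ((Pi.single m 1 : ℕ → ℝ) j) (c m) := by
  rcases eq_or_ne j m with rfl | h
  · simpa using hasDerivAt_id' (c j)
  · simpa [Function.update_of_ne h, Pi.single_eq_of_ne h] using hasDerivAt_const (c m) (c j)

lemma hasDerivAt_eval_U_update (m n : ℕ) :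
    HasDerivAt (fun t : ℝ => (U (Function.update c m t) r n).eval ξ)
      (partialDerivU c r ξ m n) (c m) := by
  induction n using Nat.twoStepInduction with
  | zero => simpa [U, partialDerivU] using hasDerivAt_const (c m) (1 : ℝ)
  | one =>
    simpa [U, partialDerivU] using (hasDerivAt_update_apply c m 0).const_sub ξ
  | more k ih ih1 =>
    simp only [eval_U_add_two]
    have hcoef := ((hasDerivAt_update_apply c m (k+1)).const_mul ((-1 : ℝ)^(k+2))).const_add ξ
    have h := (hcoef.mul ih1).sub (ih.const_mul (r (k+1)))
    rw [Function.update_eq_self] at h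
    rw [partialDerivU]
    exact h

lemma partialDerivU_of_le (m : ℕ) {n : ℕ} (hn : n ≤ m) : partialDerivU c r ξ m n = 0 := by
  induction n using Nat.twoStepInduction with
  | zero => rfl
  | one => simp [partialDerivU, Pi.single_eq_of_ne (show 0 ≠ m by omega)]
  | more k ih ih1 =>
    rw [partialDerivU, Pi.single_eq_of_ne (show k+1 ≠ m by omega), ih (by omega), ih1 (by omega)]
    ring

lemma partialDerivU_succ_self (m : ℕ) :
    partialDerivU c r ξ m (m+1) = (-1)^(m+1) * (U c r m).eval ξ := by
  cases m with
  | zero => simp [partialDerivU, U]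
  | succ j =>
    rw [partialDerivU, Pi.single_eq_same, partialDerivU_of_le c r ξ (j+1) le_rfl,
      partialDerivU_of_le c r ξ (j+1) (by omega)]
    ring

lemma casoratian_partialDerivU_U (m : ℕ) {k : ℕ} (hk : m ≤ k) :
    partialDerivU c r ξ m (k+1) * (U c r k).eval ξ - partialDerivU c r ξ m k * (U c r (k+1)).eval ξ
      = (-1)^(m+1) * ((U c r m).eval ξ)^2 * ∏ i ∈ Finset.Icc (m+1) k, r i := by
  induction k, hk using Nat.le_induction with
  | base =>
    rw [partialDerivU_succ_self, partialDerivU_of_le c r ξ m le_rfl,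
      Finset.Icc_eq_empty (Nat.not_succ_le_self m)]
    ring
  | succ k hk ih =>
    rw [partialDerivU, Pi.single_eq_of_ne (by omega), eval_U_add_two,
      Finset.prod_Icc_succ_top (by omega)]
    linear_combination r (k+1) * ih

lemma eval_U_ne_zero_of_eval_U_succ_eq_zero (hr : ∀ k, 1 ≤ k → r k ≠ 0) (n : ℕ)
    (hn : (U c r (n+1)).eval ξ = 0) : (U c r n).eval ξ ≠ 0 := by
  induction n with
  | zero => simp [U]
  | succ n ih =>
    intro h
    rw [eval_U_add_two, h, mul_zero, zero_sub, neg_eq_zero,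
      mul_eq_zero_iff_left (hr (n+1) (by omega))] at hn
    exact ih h hn

end

/-- Partial derivative of `U_{k+1}(ξ)` with respect to the parameter `c_m`. -/
theorem stmt14 (c r : ℕ → ℝ) (hr : ∀ k, 1 ≤ k → 0 < r k) (k m : ℕ) (hm : m ≤ k)
    (ξ : ℝ) (hξ : (U c r (k+1)).eval ξ = 0) :
    deriv (fun t : ℝ => (U (Function.update c m t) r (k+1)).eval ξ) (c m) =
      (-1)^(m+1) * ((U c r m).eval ξ)^2 / (U c r k).eval ξ *
        ∏ i ∈ Finset.Icc (m+1) k, r i := by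
  have hUk : (U c r k).eval ξ ≠ 0 :=
    eval_U_ne_zero_of_eval_U_succ_eq_zero c r ξ (fun i hi => (hr i hi).ne') k hξ
  have hcas := casoratian_partialDerivU_U c r ξ m hm
  rw [hξ, mul_zero, sub_zero] at hcas
  rw [(hasDerivAt_eval_U_update c r ξ m (k+1)).deriv]
  field_simp
  linear_combination hcas
end

section
/- For k=2 (double saddle-point, parameters c_0∈[α_0,β_0], c_1∈[α_1,β_1]⊂[0,∞), c_2∈[α_2,β_2]⊂[0,∞), r_1∈[a_1,b_1]⊂(0,∞), r_2∈[a_2,b_2]⊂(0,∞) with α_0>0): every root ξ of U_3(λ)=(λ+c_2)[(λ+c_1)(λ−c_0)−r_1]−r_2(λ−c_0) lies in the interval [m, M], where m is the smallest root of (λ+β_2)[(λ+β_1)(λ−α_0)−b_1]−b_2(λ−α_0) and M is the largest root of (λ+α_2)[(λ+α_1)(λ−β_0)−b_1]−b_2(λ−β_0). -/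
/-- The cubic `U₃(λ) = (λ+c₂)((λ+c₁)(λ−c₀)−r₁) − r₂(λ−c₀)`. -/
def U3 (c0 c1 c2 r1 r2 lam : ℝ) : ℝ :=
  (lam + c2) * ((lam + c1) * (lam - c0) - r1) - r2 * (lam - c0)

lemma cubic_pos (A B C x0 : ℝ) : ∃ y, x0 < y ∧ 0 < y^3 + A*y^2 + B*y + C := by
  refine ⟨max x0 (|A|+|B|+|C|) + 1, ?_, ?_⟩
  · have := le_max_left x0 (|A|+|B|+|C|); linarith
  · set y := max x0 (|A|+|B|+|C|) + 1 with hy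
    have h1 : |A|+|B|+|C| + 1 ≤ y := by
      have := le_max_right x0 (|A|+|B|+|C|); linarith
    have h2 : (1:ℝ) ≤ y := by
      have := abs_nonneg A; have := abs_nonneg B; have := abs_nonneg C; linarith
    have hA : -|A| ≤ A := neg_abs_le A
    have hB : -|B| ≤ B := neg_abs_le B
    have hC : -|C| ≤ C := neg_abs_le C
    have hyy : y ≤ y^2 := by nlinarith
    have hy1 : (1:ℝ) ≤ y^2 := by nlinarith
    have h3 : (|A|+|B|+|C|+1)*y^2 ≤ y^3 := by nlinarith [sq_nonneg y]
    have h4 : (-|A|)*y^2 ≤ A*y^2 := mul_le_mul_of_nonneg_right hA (sq_nonneg y)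
    have h5 : (-|B|)*y^2 ≤ B*y := by
      have h5a : |B| * y ≤ |B| * y^2 := mul_le_mul_of_nonneg_left hyy (abs_nonneg B)
      have h5b : (-|B|)*y ≤ B*y := mul_le_mul_of_nonneg_right hB (by linarith)
      linarith
    have h6 : (-|C|)*y^2 ≤ C := by
      have h6a : |C| * 1 ≤ |C| * y^2 := mul_le_mul_of_nonneg_left hy1 (abs_nonneg C)
      linarith
    nlinarith

lemma cubic_neg (A B C x0 : ℝ) : ∃ y, y < x0 ∧ y^3 + A*y^2 + B*y + C < 0 := by
  obtain ⟨y, hy1, hy2⟩ := cubic_pos (-A) B (-C) (-x0)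
  exact ⟨-y, by linarith, by nlinarith⟩

lemma U3_cont (c0 c1 c2 r1 r2 : ℝ) : Continuous (U3 c0 c1 c2 r1 r2) := by
  unfold U3; fun_prop

lemma U3_grow_pos (c0 c1 c2 r1 r2 x0 : ℝ) :
    ∃ y, x0 < y ∧ 0 < U3 c0 c1 c2 r1 r2 y := by
  obtain ⟨y, h1, h2⟩ := cubic_pos (c1 - c0 + c2) (c1*c2 - c0*c1 - c0*c2 - r1 - r2)
    (-(c0*c1*c2) - r1*c2 + r2*c0) x0
  refine ⟨y, h1, ?_⟩
  have : U3 c0 c1 c2 r1 r2 y = y^3 + (c1 - c0 + c2)*y^2 +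
      (c1*c2 - c0*c1 - c0*c2 - r1 - r2)*y + (-(c0*c1*c2) - r1*c2 + r2*c0) := by
    unfold U3; ring
  linarith
lemma U3_grow_neg (c0 c1 c2 r1 r2 x0 : ℝ) :
    ∃ y, y < x0 ∧ U3 c0 c1 c2 r1 r2 y < 0 := by
  obtain ⟨y, h1, h2⟩ := cubic_neg (c1 - c0 + c2) (c1*c2 - c0*c1 - c0*c2 - r1 - r2)
    (-(c0*c1*c2) - r1*c2 + r2*c0) x0
  refine ⟨y, h1, ?_⟩
  have : U3 c0 c1 c2 r1 r2 y = y^3 + (c1 - c0 + c2)*y^2 +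
      (c1*c2 - c0*c1 - c0*c2 - r1 - r2)*y + (-(c0*c1*c2) - r1*c2 + r2*c0) := by
    unfold U3; ring
  linarith

lemma pos_of_gt_greatest (f : ℝ → ℝ) (hf : Continuous f)
    (hgrow : ∀ x0, ∃ y, x0 < y ∧ 0 < f y) (M : ℝ)
    (hM : IsGreatest {x | f x = 0} M) : ∀ x, M < x → 0 < f x := by
  intro x hx
  rcases lt_trichotomy (f x) 0 with h | h | h
  · obtain ⟨y, hy1, hy2⟩ := hgrow x
    have hsub := intermediate_value_Ioo (le_of_lt hy1) hf.continuousOn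
    obtain ⟨z, hz, hz0⟩ := hsub (⟨h, hy2⟩ : (0:ℝ) ∈ Set.Ioo (f x) (f y))
    exact absurd (lt_trans hx hz.1) (not_lt.mpr (hM.2 hz0))
  · exact absurd (hM.2 h) (not_le.mpr hx)
  · exact h

lemma neg_of_lt_least (f : ℝ → ℝ) (hf : Continuous f)
    (hgrow : ∀ x0, ∃ y, y < x0 ∧ f y < 0) (m : ℝ)
    (hm : IsLeast {x | f x = 0} m) : ∀ x, x < m → f x < 0 := by
  intro x hx
  rcases lt_trichotomy (f x) 0 with h | h | h
  · exact h
  · exact absurd (hm.2 h) (not_le.mpr hx)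
  · obtain ⟨y, hy1, hy2⟩ := hgrow x
    have hsub := intermediate_value_Ioo (le_of_lt hy1) hf.continuousOn
    obtain ⟨z, hz, hz0⟩ := hsub (⟨hy2, h⟩ : (0:ℝ) ∈ Set.Ioo (f y) (f x))
    exact absurd (lt_trans hz.2 hx) (not_lt.mpr (hm.2 hz0))

set_option maxHeartbeats 800000 in
theorem stmt19 (α0 β0 α1 β1 α2 β2 a1 b1 a2 b2 : ℝ)
    (hα0 : 0 < α0) (hα1 : 0 ≤ α1) (hα2 : 0 ≤ α2) (ha1 : 0 < a1) (ha2 : 0 < a2)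
    (c0 c1 c2 r1 r2 : ℝ)
    (hc0 : c0 ∈ Set.Icc α0 β0) (hc1 : c1 ∈ Set.Icc α1 β1) (hc2 : c2 ∈ Set.Icc α2 β2)
    (hr1 : r1 ∈ Set.Icc a1 b1) (hr2 : r2 ∈ Set.Icc a2 b2)
    (m M : ℝ)
    (hm : IsLeast {x : ℝ | U3 α0 β1 β2 b1 b2 x = 0} m)
    (hM : IsGreatest {x : ℝ | U3 β0 α1 α2 b1 b2 x = 0} M) :
    ∀ ξ : ℝ, U3 c0 c1 c2 r1 r2 ξ = 0 → m ≤ ξ ∧ ξ ≤ M := by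
  intro ξ hξ
  obtain ⟨hc0l, hc0u⟩ := hc0
  obtain ⟨hc1l, hc1u⟩ := hc1
  obtain ⟨hc2l, hc2u⟩ := hc2
  obtain ⟨hr1l, hr1u⟩ := hr1
  obtain ⟨hr2l, hr2u⟩ := hr2
  have hr1p : 0 < r1 := lt_of_lt_of_le ha1 hr1l
  have hr2p : 0 < r2 := lt_of_lt_of_le ha2 hr2l
  have hb1p : 0 < b1 := lt_of_lt_of_le hr1p hr1u
  have hb2p : 0 < b2 := lt_of_lt_of_le hr2p hr2u
  unfold U3 at hξ
  constructor
  · -- lower bound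
    by_contra hcon
    push_neg at hcon
    have hPneg := neg_of_lt_least _ (U3_cont α0 β1 β2 b1 b2)
      (U3_grow_neg α0 β1 β2 b1 b2) m hm
    have hmβ2 : m ≤ -β2 := by
      by_contra h
      push_neg at h
      have := hPneg (-β2) h
      unfold U3 at this
      linarith [mul_pos hb2p (show (0:ℝ) < β2 + α0 by linarith)]
    have hxβ2 : ξ + β2 < 0 := by linarith
    have hxc2 : ξ + c2 < 0 := by linarith
    have hxc0 : ξ - c0 < 0 := by linarith
    have hxα0 : ξ - α0 < 0 := by linarith
    have hPξ : U3 α0 β1 β2 b1 b2 ξ < 0 := hPneg ξ hcon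
    unfold U3 at hPξ
    -- V_P(ξ) > 0
    have hmul2 : (ξ - α0) * ((ξ + β1) * (ξ + β2) - b2) < 0 := by
      have h := mul_pos hb1p (neg_pos.mpr hxβ2)
      linarith [hPξ, h]
    have hVP : 0 < (ξ + β1) * (ξ + β2) - b2 := by
      rcases mul_neg_iff.mp hmul2 with ⟨h1, h2⟩ | ⟨h1, h2⟩
      · linarith
      · linarith
    have hxβ1 : ξ + β1 < 0 := by
      by_contra h
      push_neg at h
      nlinarith [mul_nonpos_of_nonneg_of_nonpos h (le_of_lt hxβ2)]
    have hxc1 : ξ + c1 < 0 := by linarith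
    -- inner_c > 0
    have hmul : (ξ + c2) * ((ξ + c1) * (ξ - c0) - r1) < 0 := by
      have h := mul_pos hr2p (neg_pos.mpr hxc0)
      linarith [hξ, h]
    have hInner : 0 < (ξ + c1) * (ξ - c0) - r1 := by
      rcases mul_neg_iff.mp hmul with ⟨h1, h2⟩ | ⟨h1, h2⟩
      · linarith
      · linarith
    have p1 : 0 ≤ (β2 - c2) * ((ξ + c1) * (ξ - c0) - r1) :=
      mul_nonneg (by linarith) (le_of_lt hInner)
    have p2 : 0 ≤ ((ξ + β2) * (ξ - c0)) * (β1 - c1) :=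
      mul_nonneg (le_of_lt (mul_pos_of_neg_of_neg hxβ2 hxc0)) (by linarith)
    have p3 : 0 ≤ (-(ξ + β2)) * (b1 - r1) :=
      mul_nonneg (by linarith) (by linarith)
    have p4 : 0 ≤ (-(ξ - c0)) * (b2 - r2) :=
      mul_nonneg (by linarith) (by linarith)
    have p5 : 0 ≤ (c0 - α0) * ((ξ + β1) * (ξ + β2) - b2) :=
      mul_nonneg (by linarith) (le_of_lt hVP)
    linarith [p1, p2, p3, p4, p5]
  · -- upper bound
    by_contra hcon
    push_neg at hcon
    have hQpos := pos_of_gt_greatest _ (U3_cont β0 α1 α2 b1 b2)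
      (U3_grow_pos β0 α1 α2 b1 b2) M hM
    have hMβ0 : β0 < M := by
      obtain ⟨y, hy1, hy2⟩ := U3_grow_pos β0 α1 α2 b1 b2 β0
      have hQβ0 : U3 β0 α1 α2 b1 b2 β0 < 0 := by
        unfold U3
        linarith [mul_pos (show (0:ℝ) < β0 + α2 by linarith) hb1p]
      have hsub := intermediate_value_Ioo (le_of_lt hy1)
        (U3_cont β0 α1 α2 b1 b2).continuousOn
      obtain ⟨z, hz, hz0⟩ := hsub (⟨hQβ0, hy2⟩ :
        (0:ℝ) ∈ Set.Ioo (U3 β0 α1 α2 b1 b2 β0) (U3 β0 α1 α2 b1 b2 y))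
      exact lt_of_lt_of_le hz.1 (hM.2 hz0)
    have hxβ0 : 0 < ξ - β0 := by linarith
    have hxc0 : 0 < ξ - c0 := by linarith
    have hxα2 : 0 < ξ + α2 := by linarith
    have hxc2 : 0 < ξ + c2 := by linarith
    have hQξ : 0 < U3 β0 α1 α2 b1 b2 ξ := hQpos ξ hcon
    unfold U3 at hQξ
    -- Vα(ξ) > 0
    have hmul2 : 0 < (ξ - β0) * ((ξ + α1) * (ξ + α2) - b2) := by
      have h := mul_pos hb1p hxα2
      linarith [hQξ, h]
    have hVα : 0 < (ξ + α1) * (ξ + α2) - b2 := by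
      rcases mul_pos_iff.mp hmul2 with ⟨h1, h2⟩ | ⟨h1, h2⟩
      · linarith
      · linarith
    -- inner_c > 0
    have hmul : 0 < (ξ + c2) * ((ξ + c1) * (ξ - c0) - r1) := by
      have h := mul_pos hr2p hxc0
      linarith [hξ, h]
    have hInner : 0 < (ξ + c1) * (ξ - c0) - r1 := by
      rcases mul_pos_iff.mp hmul with ⟨h1, h2⟩ | ⟨h1, h2⟩
      · linarith
      · linarith
    have p1 : 0 ≤ (c2 - α2) * ((ξ + c1) * (ξ - c0) - r1) :=
      mul_nonneg (by linarith) (le_of_lt hInner)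
    have p2 : 0 ≤ ((ξ + α2) * (ξ - c0)) * (c1 - α1) :=
      mul_nonneg (le_of_lt (mul_pos hxα2 hxc0)) (by linarith)
    have p3 : 0 ≤ (ξ + α2) * (b1 - r1) :=
      mul_nonneg (by linarith) (by linarith)
    have p4 : 0 ≤ (ξ - c0) * (b2 - r2) :=
      mul_nonneg (by linarith) (by linarith)
    have p5 : 0 ≤ (β0 - c0) * ((ξ + α1) * (ξ + α2) - b2) :=
      mul_nonneg (by linarith) (le_of_lt hVα)
    linarith [p1, p2, p3, p4, p5]
end
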